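/- For the symmetric logistic MEV model with tail dependence function l(x₁,...,x_d) = (Σ_{j=1}^d x_j^{1/θ})^θ, θ ∈ (0,1], and λ = (1,...,1): R(X,1) = Σ_{k=1}^{d−1} (−1)^{k+1} C(d,k) · 1/(1 + k^θ) − (1 + (−1)^d)/(1 + d^θ). -/

import Mathlib

open MeasureTheory Finset

/-- Unit Fréchet distribution function F(x) = exp(-1/x). -/
noncomputable def frechetCDF (x : ℝ) : ℝ := Real.exp (-x⁻¹)

/-!
The variables `U j = F (X j)` are uniform on `(0, 1)`, and the logistic model gives
`P(U j ≤ t for all j ∈ S) = t ^ (#S ^ θ)` there. Hence `max_j U j` has distribution function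
`t ^ (d ^ θ)` and mean `d ^ θ / (1 + d ^ θ)`, while inclusion–exclusion over the events
`{U j ≤ t}` gives `P(min_j U j > t) = ∑_S (-1) ^ #S t ^ (#S ^ θ)`. Integrating these tails over
`(0, 1)` (layer cake) yields `E[min_j U j] = ∑_S (-1) ^ #S / (1 + #S ^ θ)`, and grouping the
subsets `S` by size gives the binomial sum.
-/

open Filter Topology

theorem Finset.measurable_inf' {α δ ι : Type*} [MeasurableSpace α] [SemilatticeInf α]
    [MeasurableInf₂ α] [MeasurableSpace δ] {s : Finset ι} (hs : s.Nonempty) {f : ι → δ → α}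
    (hf : ∀ n ∈ s, Measurable (f n)) : Measurable (s.inf' hs f) :=
  Finset.inf'_induction hs _ (fun _f hf _g hg ↦ hf.inf hg) fun n hn ↦ hf n hn

theorem Finset.sum_range_succ_eq_add_sum_Icc_add {M : Type*} [AddCommMonoid M] {d : ℕ}
    (hd : 0 < d) (f : ℕ → M) :
    ∑ m ∈ range (d + 1), f m = f 0 + ∑ k ∈ Icc 1 (d - 1), f k + f d := by
  obtain ⟨e, rfl⟩ : ∃ e, d = e + 1 := ⟨d - 1, by omega⟩
  rw [sum_range_succ, sum_range_eq_add_Ico _ hd, Nat.add_sub_cancel,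
    Ico_add_one_right_eq_Icc]

theorem integral_Ioo_rpow {c : ℝ} (hc : 0 ≤ c) :
    ∫ t in Set.Ioo (0 : ℝ) 1, t ^ c = 1 / (c + 1) := by
  rw [← integral_Ioc_eq_integral_Ioo, ← intervalIntegral.integral_of_le zero_le_one,
    integral_rpow (Or.inl (by linarith)), Real.one_rpow, Real.zero_rpow (by linarith)]
  ring

theorem integrableOn_Ioo_rpow {c : ℝ} (hc : 0 ≤ c) :
    IntegrableOn (fun t : ℝ ↦ t ^ c) (Set.Ioo 0 1) :=
  (intervalIntegral.intervalIntegrable_rpow' (by linarith)).1.mono_set Set.Ioo_subset_Ioc_self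

section Tails

variable {Ω : Type*} [MeasurableSpace Ω] {μ : Measure Ω}

theorem measureReal_biInter_compl_eq_sum_powerset [IsFiniteMeasure μ] {ι : Type*}
    [DecidableEq ι] (s : Finset ι) {A : ι → Set Ω} (hA : ∀ i ∈ s, MeasurableSet (A i)) :
    μ.real (⋂ i ∈ s, (A i)ᶜ) = ∑ t ∈ s.powerset, (-1) ^ #t * μ.real (⋂ i ∈ t, A i) := by
  have hmeas : ∀ t ∈ s.powerset, MeasurableSet (⋂ i ∈ t, A i) := fun t ht ↦
    .biInter t.countable_toSet fun i hi ↦ hA i (mem_powerset.1 ht hi)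
  have hind : ∀ ω, (⋂ i ∈ s, (A i)ᶜ).indicator (1 : Ω → ℝ) ω
      = ∑ t ∈ s.powerset, (-1) ^ #t * (⋂ i ∈ t, A i).indicator 1 ω := fun ω ↦ by
    have hprod (t : Finset ι) (B : ι → Set Ω) :
        (⋂ i ∈ t, B i).indicator (1 : Ω → ℝ) ω = ∏ i ∈ t, (B i).indicator 1 ω := by
      simp [prod_indicator_const_apply]
    simp_rw [hprod, Set.indicator_compl, Pi.sub_apply, Pi.one_apply, prod_sub, prod_const_one,
      mul_one]
  have hcompl : MeasurableSet (⋂ i ∈ s, (A i)ᶜ) :=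
    .biInter s.countable_toSet fun i hi ↦ (hA i hi).compl
  rw [← integral_indicator_one hcompl, integral_congr_ae (ae_of_all _ hind),
    integral_finsetSum _ fun t ht ↦ ((integrable_const 1).indicator (hmeas t ht)).const_mul _]
  exact sum_congr rfl fun t ht ↦ by rw [integral_const_mul, integral_indicator_one (hmeas t ht)]

theorem integral_eq_integral_Ioo_measureReal_lt [IsFiniteMeasure μ] {V : Ω → ℝ}
    (hV : AEMeasurable V μ) (h01 : ∀ᵐ ω ∂μ, V ω ∈ Set.Icc 0 1) :
    ∫ ω, V ω ∂μ = ∫ t in Set.Ioo 0 1, μ.real {ω | t < V ω} := by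
  rw [(Integrable.of_mem_Icc 0 1 hV h01).integral_eq_integral_meas_lt (h01.mono fun _ h ↦ h.1),
    ← integral_Ioc_eq_integral_Ioo,
    setIntegral_eq_of_subset_of_ae_sdiff_eq_zero nullMeasurableSet_Ioi Set.Ioc_subset_Ioi_self]
  refine Eventually.of_forall fun t ht ↦ ?_
  have ht1 : 1 < t := by simp_all
  refine (measureReal_eq_zero_iff).2 (measure_mono_null (fun ω hω ↦ ?_) (ae_iff.1 h01))
  exact fun h ↦ (ht1.trans hω).not_ge h.2

theorem integral_eq_div_of_measureReal_le_eq_rpow [IsProbabilityMeasure μ] {V : Ω → ℝ}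
    (hV : AEMeasurable V μ) (h01 : ∀ᵐ ω ∂μ, V ω ∈ Set.Icc 0 1) {c : ℝ} (hc : 0 ≤ c)
    (hcdf : ∀ t ∈ Set.Ioo 0 1, μ.real {ω | V ω ≤ t} = t ^ c) :
    ∫ ω, V ω ∂μ = c / (c + 1) := by
  have htail : Set.EqOn (fun t ↦ μ.real {ω | t < V ω}) (fun t ↦ 1 - t ^ c) (Set.Ioo 0 1) :=
      fun t ht ↦ by
    dsimp only
    rw [← hcdf t ht, ← probReal_compl_eq_one_sub₀ (nullMeasurableSet_le hV aemeasurable_const)]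
    simp only [Set.compl_ofPred, not_le]
  rw [integral_eq_integral_Ioo_measureReal_lt hV h01,
    setIntegral_congr_fun measurableSet_Ioo htail,
    integral_sub (integrable_const 1) (integrableOn_Ioo_rpow hc), integral_Ioo_rpow hc]
  field_simp
  simp

section Extremes

variable {ι : Type*} [Fintype ι] {U : ι → Ω → ℝ}

theorem measurable_sup'_apply (hU : ∀ i, Measurable (U i)) (hne : (univ : Finset ι).Nonempty) :
    Measurable fun ω ↦ univ.sup' hne (fun i ↦ U i ω) := by
  simpa only [← Finset.sup'_apply] using Finset.measurable_sup' hne fun i _ ↦ hU i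

theorem measurable_inf'_apply (hU : ∀ i, Measurable (U i)) (hne : (univ : Finset ι).Nonempty) :
    Measurable fun ω ↦ univ.inf' hne (fun i ↦ U i ω) := by
  simpa only [← Finset.inf'_apply] using Finset.measurable_inf' hne fun i _ ↦ hU i

theorem ae_sup'_mem_Icc (hU01 : ∀ᵐ ω ∂μ, ∀ i, U i ω ∈ Set.Icc 0 1)
    (hne : (univ : Finset ι).Nonempty) : ∀ᵐ ω ∂μ, univ.sup' hne (fun i ↦ U i ω) ∈ Set.Icc 0 1 :=
  hU01.mono fun _ hω ↦ sup'_mem (Set.Icc 0 1)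
    (fun _ hx _ hy ↦ ⟨le_sup_of_le_left hx.1, sup_le hx.2 hy.2⟩) _ _ _ fun i _ ↦ hω i

theorem ae_inf'_mem_Icc (hU01 : ∀ᵐ ω ∂μ, ∀ i, U i ω ∈ Set.Icc 0 1)
    (hne : (univ : Finset ι).Nonempty) : ∀ᵐ ω ∂μ, univ.inf' hne (fun i ↦ U i ω) ∈ Set.Icc 0 1 :=
  hU01.mono fun _ hω ↦ inf'_mem (Set.Icc 0 1)
    (fun _ hx _ hy ↦ ⟨le_inf hx.1 hy.1, inf_le_of_left_le hx.2⟩) _ _ _ fun i _ ↦ hω i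

theorem integral_sup'_eq_div [IsProbabilityMeasure μ] (hU : ∀ i, Measurable (U i))
    (hU01 : ∀ᵐ ω ∂μ, ∀ i, U i ω ∈ Set.Icc 0 1) (hne : (univ : Finset ι).Nonempty) {c : ℝ}
    (hc : 0 ≤ c) (hcdf : ∀ t ∈ Set.Ioo 0 1, μ.real {ω | ∀ i, U i ω ≤ t} = t ^ c) :
    ∫ ω, univ.sup' hne (fun i ↦ U i ω) ∂μ = c / (c + 1) :=
  integral_eq_div_of_measureReal_le_eq_rpow (measurable_sup'_apply hU hne).aemeasurable
    (ae_sup'_mem_Icc hU01 hne) hc fun t ht ↦ by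
      simp only [sup'_le_iff, mem_univ, true_implies, hcdf t ht]

theorem integral_inf'_eq_sum_powerset [IsProbabilityMeasure μ] [DecidableEq ι]
    (hU : ∀ i, Measurable (U i)) (hU01 : ∀ᵐ ω ∂μ, ∀ i, U i ω ∈ Set.Icc 0 1)
    (hne : (univ : Finset ι).Nonempty)
    {c : Finset ι → ℝ} (hc : ∀ T, 0 ≤ c T)
    (hcdf : ∀ T, ∀ t ∈ Set.Ioo 0 1, μ.real {ω | ∀ i ∈ T, U i ω ≤ t} = t ^ c T) :
    ∫ ω, univ.inf' hne (fun i ↦ U i ω) ∂μ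
      = ∑ T ∈ (univ : Finset ι).powerset, (-1) ^ #T / (c T + 1) := by
  have htail : Set.EqOn (fun t ↦ μ.real {ω | t < univ.inf' hne (fun i ↦ U i ω)})
      (fun t ↦ ∑ T ∈ (univ : Finset ι).powerset, (-1) ^ #T * t ^ c T) (Set.Ioo 0 1) :=
      fun t ht ↦ by
    dsimp only
    have hset : {ω | t < univ.inf' hne (fun i ↦ U i ω)} = ⋂ i ∈ univ, {ω | U i ω ≤ t}ᶜ := by
      ext ω; simp
    rw [hset, measureReal_biInter_compl_eq_sum_powerset _
      fun i _ ↦ measurableSet_le (hU i) measurable_const]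
    refine sum_congr rfl fun T _ ↦ ?_
    rw [← hcdf T t ht]
    congr 2
    ext ω; simp
  rw [integral_eq_integral_Ioo_measureReal_lt (measurable_inf'_apply hU hne).aemeasurable
      (ae_inf'_mem_Icc hU01 hne), setIntegral_congr_fun measurableSet_Ioo htail,
    integral_finsetSum _ fun T _ ↦ (integrableOn_Ioo_rpow (hc T)).const_mul _]
  exact sum_congr rfl fun T _ ↦ by rw [integral_const_mul, integral_Ioo_rpow (hc T), mul_one_div]

end Extremes

end Tails

theorem measurable_frechetCDF : Measurable frechetCDF :=
  Real.measurable_exp.comp measurable_inv.neg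

theorem frechetCDF_mem_Icc {x : ℝ} (hx : 0 ≤ x) : frechetCDF x ∈ Set.Icc 0 1 :=
  ⟨(Real.exp_pos _).le, Real.exp_le_one_iff.2 (neg_nonpos.2 (inv_nonneg.2 hx))⟩

theorem frechetCDF_le_iff {x t : ℝ} (hx : 0 < x) (ht₀ : 0 < t) (ht₁ : t < 1) :
    frechetCDF x ≤ t ↔ x ≤ (-Real.log t)⁻¹ := by
  rw [frechetCDF, ← Real.le_log_iff_exp_le ht₀, neg_le,
    le_inv_comm₀ (neg_pos.2 (Real.log_neg ht₀ ht₁)) hx]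

theorem tendsto_frechetCDF_nhdsGT_zero : Tendsto frechetCDF (𝓝[>] 0) (𝓝 0) :=
  Real.tendsto_exp_atBot.comp (tendsto_neg_atTop_atBot.comp tendsto_inv_nhdsGT_zero)

theorem ae_pos_of_measureReal_le_eq_frechetCDF {Ω : Type*} [MeasurableSpace Ω] {μ : Measure Ω}
    [IsFiniteMeasure μ] {Y : Ω → ℝ}
    (hY : ∀ x, 0 < x → μ.real {ω | Y ω ≤ x} = frechetCDF x) : ∀ᵐ ω ∂μ, 0 < Y ω := by
  have hbound : ∀ᶠ x in 𝓝[>] 0, μ.real {ω | Y ω ≤ 0} ≤ frechetCDF x :=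
    eventually_nhdsWithin_of_forall fun x (hx : 0 < x) ↦ hY x hx ▸
      measureReal_mono fun ω (hω : Y ω ≤ 0) ↦ hω.trans hx.le
  have hnull : μ.real {ω | Y ω ≤ 0} = 0 :=
    le_antisymm (ge_of_tendsto tendsto_frechetCDF_nhdsGT_zero hbound) measureReal_nonneg
  rw [measureReal_eq_zero_iff] at hnull
  simpa [ae_iff] using hnull

/-- `P(X ≤ x) = exp (-ℓ (1 / x))` on every sub-vector, with the logistic stable tail dependence
function `ℓ y = (∑ j, y j ^ (1 / θ)) ^ θ`. -/
def IsSymmetricLogistic {Ω ι : Type*} [MeasurableSpace Ω] (μ : Measure Ω) (θ : ℝ)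
    (X : ι → Ω → ℝ) : Prop :=
  ∀ S : Finset ι, S.Nonempty → ∀ x : ι → ℝ, (∀ j, 0 < x j) →
    μ.real {ω | ∀ j ∈ S, X j ω ≤ x j} = Real.exp (-(∑ j ∈ S, (x j)⁻¹ ^ θ⁻¹) ^ θ)

namespace IsSymmetricLogistic

variable {Ω ι : Type*} [MeasurableSpace Ω] {μ : Measure Ω} {θ : ℝ} {X : ι → Ω → ℝ}

theorem measureReal_forall_le_const (h : IsSymmetricLogistic μ θ X) (hθ : 0 < θ)
    {S : Finset ι} (hS : S.Nonempty) {x : ℝ} (hx : 0 < x) :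
    μ.real {ω | ∀ j ∈ S, X j ω ≤ x} = Real.exp (-((#S : ℝ) ^ θ * x⁻¹)) := by
  rw [h S hS (fun _ ↦ x) fun _ ↦ hx, sum_const, nsmul_eq_mul,
    Real.mul_rpow (by positivity) (by positivity), Real.rpow_inv_rpow (by positivity) hθ.ne']

theorem measureReal_le (h : IsSymmetricLogistic μ θ X) (hθ : 0 < θ) (j : ι) {x : ℝ}
    (hx : 0 < x) : μ.real {ω | X j ω ≤ x} = frechetCDF x := by
  simpa [frechetCDF] using h.measureReal_forall_le_const hθ (singleton_nonempty j) hx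

theorem ae_pos [IsFiniteMeasure μ] [Countable ι] (h : IsSymmetricLogistic μ θ X) (hθ : 0 < θ) :
    ∀ᵐ ω ∂μ, ∀ j, 0 < X j ω :=
  ae_all_iff.2 fun j ↦ ae_pos_of_measureReal_le_eq_frechetCDF fun _ ↦ h.measureReal_le hθ j

theorem measureReal_forall_frechetCDF_le [IsProbabilityMeasure μ] [Countable ι]
    (h : IsSymmetricLogistic μ θ X) (hθ : 0 < θ) (S : Finset ι) {t : ℝ} (ht : t ∈ Set.Ioo 0 1) :
    μ.real {ω | ∀ j ∈ S, frechetCDF (X j ω) ≤ t} = t ^ ((#S : ℝ) ^ θ) := by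
  obtain rfl | hS := S.eq_empty_or_nonempty
  · simp [Real.zero_rpow hθ.ne']
  have hset : {ω | ∀ j ∈ S, frechetCDF (X j ω) ≤ t}
      =ᵐ[μ] {ω | ∀ j ∈ S, X j ω ≤ (-Real.log t)⁻¹} := by
    refine eventuallyEq_set.2 ?_
    filter_upwards [h.ae_pos hθ] with ω hω
    simp only [frechetCDF_le_iff (hω _) ht.1 ht.2]
  rw [measureReal_congr hset,
    h.measureReal_forall_le_const hθ hS (inv_pos.2 (neg_pos.2 (Real.log_neg ht.1 ht.2))), inv_inv,
    Real.rpow_def_of_pos ht.1]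
  ring_nf

end IsSymmetricLogistic

theorem stmt17_general
    {Ω : Type*} [MeasurableSpace Ω] (μ : Measure Ω) [IsProbabilityMeasure μ]
    {d : ℕ} (hd : 0 < d) (θ : ℝ) (hθ₀ : 0 < θ)
    (X : Fin d → Ω → ℝ) (hXm : ∀ j, Measurable (X j))
    -- all margins of X are symmetric logistic with unit Fréchet margins:
    -- for every nonempty S, P(∀ j∈S, X j ≤ x j) = exp(−(Σ_{j∈S} (x j)⁻¹^{1/θ})^θ)
    (hlog : ∀ S : Finset (Fin d), S.Nonempty → ∀ x : Fin d → ℝ, (∀ j, 0 < x j) →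
      (μ {ω | ∀ j ∈ S, X j ω ≤ x j}).toReal
        = Real.exp (-(∑ j ∈ S, ((x j)⁻¹) ^ θ⁻¹) ^ θ)) :
    ∫ ω, (Finset.univ.sup' ⟨⟨0, hd⟩, Finset.mem_univ _⟩
          (fun j => frechetCDF (X j ω))
        - Finset.univ.inf' ⟨⟨0, hd⟩, Finset.mem_univ _⟩
          (fun j => frechetCDF (X j ω))) ∂μ
      = (∑ k ∈ Finset.Icc 1 (d - 1),
            (-1 : ℝ) ^ (k + 1) * (d.choose k : ℝ) * (1 / (1 + (k : ℝ) ^ θ)))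
        - (1 + (-1 : ℝ) ^ d) * (1 / (1 + (d : ℝ) ^ θ)) := by
  have hX : IsSymmetricLogistic μ θ X := hlog
  have hne : (univ : Finset (Fin d)).Nonempty := ⟨⟨0, hd⟩, mem_univ _⟩
  have hU : ∀ j, Measurable fun ω ↦ frechetCDF (X j ω) := fun j ↦
    measurable_frechetCDF.comp (hXm j)
  have hU01 : ∀ᵐ ω ∂μ, ∀ j, frechetCDF (X j ω) ∈ Set.Icc 0 1 :=
    (hX.ae_pos hθ₀).mono fun _ hω j ↦ frechetCDF_mem_Icc (hω j).le
  have hcdf := hX.measureReal_forall_frechetCDF_le hθ₀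
  rw [integral_sub (.of_mem_Icc 0 1 (measurable_sup'_apply hU hne).aemeasurable
      (ae_sup'_mem_Icc hU01 hne)) (.of_mem_Icc 0 1 (measurable_inf'_apply hU hne).aemeasurable
      (ae_inf'_mem_Icc hU01 hne)),
    integral_sup'_eq_div hU hU01 hne (c := (d : ℝ) ^ θ) (by positivity)
      fun t ht ↦ by simpa using hcdf univ ht,
    integral_inf'_eq_sum_powerset hU hU01 hne (fun _ ↦ by positivity) fun T _ ht ↦ hcdf T ht,
    sum_powerset_apply_card (fun m ↦ (-1 : ℝ) ^ m / ((m : ℝ) ^ θ + 1)),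
    card_univ, Fintype.card_fin, sum_range_succ_eq_add_sum_Icc_add hd]
  have hsum : ∑ k ∈ Icc 1 (d - 1), (-1 : ℝ) ^ (k + 1) * d.choose k * (1 / (1 + (k : ℝ) ^ θ))
      = -∑ k ∈ Icc 1 (d - 1), (d.choose k : ℝ) * ((-1) ^ k / ((k : ℝ) ^ θ + 1)) := by
    rw [← sum_neg_distrib]
    exact sum_congr rfl fun k _ ↦ by ring
  have hd' : (d : ℝ) ^ θ + 1 ≠ 0 := by positivity
  simp only [hsum, Nat.choose_zero_right, Nat.choose_self, CharP.cast_eq_zero,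
    Real.zero_rpow hθ₀.ne', one_smul, nsmul_eq_mul]
  field_simp
  ring

/-- Max-min coefficient R(X,1) for the symmetric logistic MEV model with
tail dependence function l(x) = (Σ x_j^{1/θ})^θ. -/
theorem stmt17
    {Ω : Type*} [MeasurableSpace Ω] (μ : Measure Ω) [IsProbabilityMeasure μ]
    {d : ℕ} (hd : 0 < d) (θ : ℝ) (hθ₀ : 0 < θ) (hθ₁ : θ ≤ 1)
    (X : Fin d → Ω → ℝ) (hXm : ∀ j, Measurable (X j))
    -- all margins of X are symmetric logistic with unit Fréchet margins:
    -- for every nonempty S, P(∀ j∈S, X j ≤ x j) = exp(−(Σ_{j∈S} (x j)⁻¹^{1/θ})^θ)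
    (hlog : ∀ S : Finset (Fin d), S.Nonempty → ∀ x : Fin d → ℝ, (∀ j, 0 < x j) →
      (μ {ω | ∀ j ∈ S, X j ω ≤ x j}).toReal
        = Real.exp (-(∑ j ∈ S, ((x j)⁻¹) ^ θ⁻¹) ^ θ)) :
    ∫ ω, (Finset.univ.sup' ⟨⟨0, hd⟩, Finset.mem_univ _⟩
          (fun j => frechetCDF (X j ω))
        - Finset.univ.inf' ⟨⟨0, hd⟩, Finset.mem_univ _⟩
          (fun j => frechetCDF (X j ω))) ∂μ
      = (∑ k ∈ Finset.Icc 1 (d - 1),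
            (-1 : ℝ) ^ (k + 1) * (d.choose k : ℝ) * (1 / (1 + (k : ℝ) ^ θ)))
        - (1 + (-1 : ℝ) ^ d) * (1 / (1 + (d : ℝ) ^ θ)) :=
  stmt17_general μ hd θ hθ₀ X hXm hlog
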